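/- Duality upper bound for the fourth-moment problem: for any x₀ > 0 and any χ, if λ₀, λ₁, λ₂ are chosen so that the quadratic q(t) = λ₀ + λ₁ t + λ₂ t² satisfies q(t) ≥ r₀(t, χ) for all t ≥ 0, where r₀(t, χ) = r(√t, χ), then ρ(m₂, κ, χ) ≤ λ₀ + λ₁ m₂ + λ₂ κ m₂² for all valid moment pairs (m₂, κ). In particular, taking the tangent quadratic at x₀, ρ(m₂, κ, χ) ≤ r₀(x₀,χ) + (m₂ - x₀) r₀'(x₀,χ) + ((x₀-m₂)² + (κ-1)m₂²) sup_{x≥0} δ(x; x₀), where δ(x; x₀) = (r₀(x,χ) - r₀(x₀,χ) - (x-x₀)r₀'(x₀,χ))/(x-x₀)² for x ≠ x₀. -/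

import Mathlib

/-!
Weak duality: since `r b χ = r₀(b², χ)`, integrating `r₀(b², χ) ≤ q(b²)` against a law `F` with
`E_F[b²] = m₂`, `E_F[b⁴] = κ m₂²` bounds `E_F[r]` by `λ₀ + λ₁ m₂ + λ₂ κ m₂²`.
For the tangent bound, `r₀(·, χ)` is `C²` near `x₀ > 0` and bounded, so `δ(·; x₀)` is bounded
above; with `s = sup δ` the quadratic `r₀(x₀) + (t - x₀) r₀'(x₀) + s (t - x₀)²` dominates `r₀` on
`[0, ∞)`, and weak duality applies to it.
-/

open MeasureTheory ProbabilityTheory Real Set Filter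

noncomputable def Phi (x : ℝ) : ℝ := (gaussianReal 0 1 (Set.Iic x)).toReal

noncomputable def r (b χ : ℝ) : ℝ := Phi (-χ - b) + Phi (-χ + b)

noncomputable def r0 (t χ : ℝ) : ℝ := r (Real.sqrt t) χ

/-- Worst-case non-coverage over distributions with second moment `m₂` and kurtosis `κ`. -/
noncomputable def ρ₄ (m₂ κ χ : ℝ) : ℝ :=
  sSup {x | ∃ F : Measure ℝ, IsProbabilityMeasure F ∧
    (∫ b, b ^ 2 ∂F) = m₂ ∧ (∫ b, b ^ 4 ∂F) = κ * m₂ ^ 2 ∧ (∫ b, r b χ ∂F) = x}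

/-- Supremum of the curvature ratio `δ(x; x₀)` of `r₀(·, χ)` relative to its tangent at
`x₀`, over `x ≥ 0`. -/
noncomputable def supδ (x₀ χ : ℝ) : ℝ :=
  sSup {y | ∃ x, 0 ≤ x ∧ x ≠ x₀ ∧
    y = (r0 x χ - r0 x₀ χ - (x - x₀) * deriv (fun t => r0 t χ) x₀) / (x - x₀) ^ 2}

open scoped NNReal Topology

theorem Convex.abs_sub_sub_mul_le_of_lipschitzOnWith {f f' : ℝ → ℝ} {s : Set ℝ} {K : ℝ≥0}
    {a b : ℝ} (hs : Convex ℝ s) (hf : ∀ x ∈ s, HasDerivWithinAt f (f' x) s x)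
    (hf' : LipschitzOnWith K f' s) (ha : a ∈ s) (hb : b ∈ s) :
    |f b - f a - (b - a) * f' a| ≤ K * (b - a) ^ 2 := by
  have hseg : segment ℝ a b ⊆ s := hs.segment_subset ha hb
  have hmvt := (convex_segment a b).norm_image_sub_le_of_norm_hasDerivWithin_le
    (f := fun x => f x - x * f' a) (f' := fun x => f' x - f' a) (C := K * |b - a|)
    (fun x hx => ((hf x (hseg hx)).mono hseg).sub (hasDerivAt_mul_const _).hasDerivWithinAt)
    (fun x hx => (hf'.dist_le_mul x (hseg hx) a ha).trans <|
      mul_le_mul_of_nonneg_left (norm_sub_le_of_mem_segment hx) K.coe_nonneg)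
    (left_mem_segment ℝ a b) (right_mem_segment ℝ a b)
  calc |f b - f a - (b - a) * f' a| = ‖(f b - b * f' a) - (f a - a * f' a)‖ := by
        rw [Real.norm_eq_abs]; ring_nf
    _ ≤ K * |b - a| * ‖b - a‖ := hmvt
    _ = K * (b - a) ^ 2 := by rw [Real.norm_eq_abs, mul_assoc, ← sq, sq_abs]

theorem ContDiffAt.isBigO_sub_sub_deriv_mul {f : ℝ → ℝ} {x₀ : ℝ} (hf : ContDiffAt ℝ 2 f x₀) :
    (fun x => f x - f x₀ - (x - x₀) * deriv f x₀) =O[𝓝 x₀] fun x => (x - x₀) ^ 2 := by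
  obtain ⟨K, U, hU, hK⟩ := (hf.derivWithin (m := 1) (by norm_num)).exists_lipschitzOnWith
  have hdiff : ∀ᶠ y in 𝓝 x₀, DifferentiableAt ℝ f y :=
    (hf.eventually (by simp)).mono fun y hy => hy.differentiableAt two_ne_zero
  obtain ⟨ε, hε, hball⟩ := Metric.mem_nhds_iff.1 (inter_mem hU hdiff)
  refine Asymptotics.IsBigO.of_bound K
    (eventually_of_mem (Metric.ball_mem_nhds x₀ hε) fun x hx => ?_)
  rw [Real.norm_eq_abs, norm_pow, Real.norm_eq_abs, sq_abs]
  exact (convex_ball x₀ ε).abs_sub_sub_mul_le_of_lipschitzOnWith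
    (fun y hy => (hball hy).2.hasDerivAt.hasDerivWithinAt) (hK.mono fun y hy => (hball hy).1)
    (Metric.mem_ball_self hε) hx

theorem bddAbove_taylor_ratio {f : ℝ → ℝ} {x₀ c : ℝ} (hf : BddAbove (range f))
    (hO : (fun x => f x - f x₀ - (x - x₀) * c) =O[𝓝 x₀] fun x => (x - x₀) ^ 2) :
    BddAbove {y | ∃ x, x ≠ x₀ ∧ y = (f x - f x₀ - (x - x₀) * c) / (x - x₀) ^ 2} := by
  obtain ⟨K, hK⟩ := hO.bound
  obtain ⟨ε, hε, hnear⟩ := Metric.eventually_nhds_iff.1 hK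
  obtain ⟨M, hM⟩ := hf
  have hfM : ∀ x, f x ≤ M := fun x => hM ⟨x, rfl⟩
  refine ⟨max K ((M - f x₀) / ε ^ 2 + |c| / ε), ?_⟩
  rintro _ ⟨x, hx, rfl⟩
  have hd : 0 < |x - x₀| := abs_pos.2 (sub_ne_zero.2 hx)
  rw [div_le_iff₀ (by positivity), ← sq_abs (x - x₀)]
  rcases lt_or_ge |x - x₀| ε with hlt | hge
  · have := hnear (by rwa [Real.dist_eq])
    rw [Real.norm_eq_abs, Real.norm_eq_abs, abs_sq, ← sq_abs] at this
    exact (le_abs_self _).trans (this.trans (by gcongr; exact le_max_left _ _))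
  · refine le_trans ?_ (mul_le_mul_of_nonneg_right (le_max_right _ _) (sq_nonneg _))
    have h1 : M - f x₀ ≤ (M - f x₀) / ε ^ 2 * |x - x₀| ^ 2 := by
      rw [div_mul_eq_mul_div, le_div_iff₀ (by positivity)]
      exact mul_le_mul_of_nonneg_left (pow_le_pow_left₀ hε.le hge 2) (sub_nonneg.2 (hfM x₀))
    have h2 : |x - x₀| * |c| ≤ |c| / ε * |x - x₀| ^ 2 := by
      rw [div_mul_eq_mul_div, le_div_iff₀ hε, sq]
      nlinarith [mul_nonneg (mul_nonneg (abs_nonneg c) hd.le) (sub_nonneg.2 hge)]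
    nlinarith [hfM x, neg_abs_le ((x - x₀) * c), abs_mul (x - x₀) c]

lemma Phi_nonneg (x : ℝ) : 0 ≤ Phi x := measureReal_nonneg

lemma Phi_le_one (x : ℝ) : Phi x ≤ 1 := measureReal_le_one

lemma hasDerivAt_Phi (x : ℝ) : HasDerivAt Phi (gaussianPDFReal 0 1 x) x := by
  have hPhi : ∀ y, Phi y = (∫ t in (0 : ℝ)..y, gaussianPDFReal 0 1 t) + Phi 0 := by
    intro y
    simp only [Phi, gaussianReal_apply_eq_integral 0 one_ne_zero, ENNReal.toReal_ofReal
        (setIntegral_nonneg measurableSet_Iic fun t _ => gaussianPDFReal_nonneg 0 1 t),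
      ← intervalIntegral.integral_Iic_sub_Iic ((integrable_gaussianPDFReal 0 1).integrableOn)
        ((integrable_gaussianPDFReal 0 1).integrableOn), sub_add_cancel]
  have hcont : Continuous (gaussianPDFReal 0 1) := by unfold gaussianPDFReal; fun_prop
  rw [funext hPhi]
  exact ((hcont.integral_hasStrictDerivAt 0 x).hasDerivAt).add_const _

lemma contDiff_Phi : ContDiff ℝ 2 Phi := by
  rw [show (2 : WithTop ℕ∞) = 1 + 1 from rfl, contDiff_succ_iff_deriv]
  refine ⟨fun x => (hasDerivAt_Phi x).differentiableAt, by simp, ?_⟩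
  rw [show deriv Phi = gaussianPDFReal 0 1 from funext fun x => (hasDerivAt_Phi x).deriv]
  unfold gaussianPDFReal
  fun_prop

lemma r_nonneg (b χ : ℝ) : 0 ≤ r b χ := add_nonneg (Phi_nonneg _) (Phi_nonneg _)

lemma r_le_two (b χ : ℝ) : r b χ ≤ 2 := by
  unfold r; linarith [Phi_le_one (-χ - b), Phi_le_one (-χ + b)]

lemma r_neg (b χ : ℝ) : r (-b) χ = r b χ := by
  rw [r, r, sub_neg_eq_add, ← sub_eq_add_neg, add_comm]

lemma r_eq_r0_sq (b χ : ℝ) : r b χ = r0 (b ^ 2) χ := by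
  rw [r0, Real.sqrt_sq_eq_abs]
  rcases abs_choice b with h | h <;> rw [h]
  exact (r_neg b χ).symm

lemma continuous_r (χ : ℝ) : Continuous fun b => r b χ := by
  have : Continuous Phi := contDiff_Phi.continuous
  unfold r; fun_prop

lemma contDiffAt_r0 {χ x₀ : ℝ} (hx₀ : x₀ ≠ 0) : ContDiffAt ℝ 2 (fun t => r0 t χ) x₀ := by
  have hsqrt : ContDiffAt ℝ 2 Real.sqrt x₀ := Real.contDiffAt_sqrt hx₀
  exact (contDiff_Phi.contDiffAt.comp x₀ (contDiffAt_const.sub hsqrt)).add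
    (contDiff_Phi.contDiffAt.comp x₀ (contDiffAt_const.add hsqrt))

lemma integral_le_of_le_quadratic_sq {F : Measure ℝ} [IsProbabilityMeasure F] {f : ℝ → ℝ}
    {l₀ l₁ l₂ : ℝ} (hf : Integrable f F) (h2 : Integrable (fun b => b ^ 2) F)
    (h4 : Integrable (fun b => b ^ 4) F) (hle : ∀ b, f b ≤ l₀ + l₁ * b ^ 2 + l₂ * b ^ 4) :
    ∫ b, f b ∂F ≤ l₀ + l₁ * ∫ b, b ^ 2 ∂F + l₂ * ∫ b, b ^ 4 ∂F := by
  have hq : Integrable (fun b => l₀ + l₁ * b ^ 2) F := (integrable_const _).add (h2.const_mul _)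
  calc ∫ b, f b ∂F ≤ ∫ b, (l₀ + l₁ * b ^ 2 + l₂ * b ^ 4) ∂F :=
        integral_mono hf (hq.add (h4.const_mul _)) hle
    _ = _ := by
      rw [integral_add hq (h4.const_mul _), integral_add (integrable_const _) (h2.const_mul _),
        integral_const, integral_const_mul, integral_const_mul, probReal_univ, one_smul]

/-- The right side is `E[q(T)]` for the two-point law `T ∈ {0, κ m}` with weights
`1 - 1/κ, 1/κ`, which has `E[T] = m` and `E[T²] = κ m²`. -/
lemma quadratic_moment_nonneg {l₀ l₁ l₂ m κ : ℝ}
    (hq : ∀ t, 0 ≤ t → 0 ≤ l₀ + l₁ * t + l₂ * t ^ 2) (hm : 0 ≤ m) (hκ : 1 ≤ κ) :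
    0 ≤ l₀ + l₁ * m + l₂ * κ * m ^ 2 := by
  have h0 := hq 0 le_rfl
  have hκm := hq (κ * m) (by positivity)
  have : 0 ≤ κ * (l₀ + l₁ * m + l₂ * κ * m ^ 2) := by nlinarith
  exact nonneg_of_mul_nonneg_right this (by linarith)

lemma ρ₄_le_of_le_quadratic {χ m₂ κ l₀ l₁ l₂ : ℝ} (hm : 0 < m₂) (hκ : 1 ≤ κ)
    (hdom : ∀ t, 0 ≤ t → r0 t χ ≤ l₀ + l₁ * t + l₂ * t ^ 2) :
    ρ₄ m₂ κ χ ≤ l₀ + l₁ * m₂ + l₂ * κ * m₂ ^ 2 := by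
  refine Real.sSup_le ?_ (quadratic_moment_nonneg
    (fun t ht => (r_nonneg _ χ).trans (hdom t ht)) hm.le hκ)
  rintro _ ⟨F, hF, h2, h4, rfl⟩
  have hint2 : Integrable (fun b => b ^ 2) F :=
    Integrable.of_integral_ne_zero (by rw [h2]; positivity)
  have hint4 : Integrable (fun b => b ^ 4) F :=
    Integrable.of_integral_ne_zero (by rw [h4]; positivity)
  have hintr : Integrable (fun b => r b χ) F := by
    refine Integrable.of_bound (continuous_r χ).aestronglyMeasurable 2 (ae_of_all _ fun b => ?_)
    rw [Real.norm_eq_abs, abs_of_nonneg (r_nonneg b χ)]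
    exact r_le_two b χ
  calc ∫ b, r b χ ∂F ≤ l₀ + l₁ * ∫ b, b ^ 2 ∂F + l₂ * ∫ b, b ^ 4 ∂F :=
        integral_le_of_le_quadratic_sq hintr hint2 hint4 fun b => by
          simpa only [r_eq_r0_sq, ← pow_mul] using hdom _ (sq_nonneg b)
    _ = l₀ + l₁ * m₂ + l₂ * κ * m₂ ^ 2 := by rw [h2, h4]; ring

lemma r0_le_tangent_add_supδ_mul_sq {χ x₀ t : ℝ} (hx₀ : x₀ ≠ 0) (ht : 0 ≤ t) :
    r0 t χ ≤ r0 x₀ χ + (t - x₀) * deriv (fun t => r0 t χ) x₀ + supδ x₀ χ * (t - x₀) ^ 2 := by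
  rcases eq_or_ne t x₀ with rfl | hne
  · simp
  have hδ : (r0 t χ - r0 x₀ χ - (t - x₀) * deriv (fun t => r0 t χ) x₀) / (t - x₀) ^ 2 ≤
      supδ x₀ χ := by
    refine le_csSup (BddAbove.mono ?_ (bddAbove_taylor_ratio ⟨2, ?_⟩
      (contDiffAt_r0 (χ := χ) hx₀).isBigO_sub_sub_deriv_mul)) ⟨t, ht, hne, rfl⟩
    · rintro y ⟨x, -, hx, hy⟩
      exact ⟨x, hx, hy⟩
    · rintro _ ⟨t, rfl⟩
      exact r_le_two _ χ
  rw [div_le_iff₀ (sq_pos_of_ne_zero (sub_ne_zero.2 hne))] at hδ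
  linarith

/-- Duality upper bound for the fourth-moment problem: any quadratic dominating
`r₀(·, χ)` on `[0, ∞)` bounds the worst-case non-coverage; in particular the tangent
quadratic at `x₀` yields the stated bound. -/
theorem duality_upper_bound (χ m₂ κ l₀ l₁ l₂ x₀ : ℝ) (hm : 0 < m₂) (hκ : 1 < κ)
    (hx₀ : 0 < x₀)
    (hdom : ∀ t, 0 ≤ t → r0 t χ ≤ l₀ + l₁ * t + l₂ * t ^ 2) :
    ρ₄ m₂ κ χ ≤ l₀ + l₁ * m₂ + l₂ * κ * m₂ ^ 2 ∧
    ρ₄ m₂ κ χ ≤ r0 x₀ χ + (m₂ - x₀) * deriv (fun t => r0 t χ) x₀ +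
      ((x₀ - m₂) ^ 2 + (κ - 1) * m₂ ^ 2) * supδ x₀ χ := by
  refine ⟨ρ₄_le_of_le_quadratic hm hκ.le hdom, ?_⟩
  set c := deriv (fun t => r0 t χ) x₀
  set s := supδ x₀ χ
  calc ρ₄ m₂ κ χ ≤ (r0 x₀ χ - x₀ * c + s * x₀ ^ 2) + (c - 2 * s * x₀) * m₂ + s * κ * m₂ ^ 2 :=
        ρ₄_le_of_le_quadratic hm hκ.le fun t ht =>
          (r0_le_tangent_add_supδ_mul_sq hx₀.ne' ht).trans_eq (by ring)
    _ = _ := by ring
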